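/- Let R be a Noetherian regular local ring of prime characteristic p > 0 satisfying condition (*), let a be an ideal of R generated by m elements, and let α > m be an F-jumping coefficient of a. Then α − 1 is also an F-jumping coefficient of a. -/

import Mathlib

/-- The `q`-th bracket power of an ideal: the ideal generated by the `q`-th powers
of the elements of `J`. -/
def bracketPow {R : Type*} [CommRing R] (J : Ideal R) (q : ℕ) : Ideal R :=
  Ideal.span ((fun x => x ^ q) '' (J : Set R))

/-- `Ie p a e` is the intersection of all ideals `I` with `a ⊆ I^{[p^e]}`. -/
def Ie {R : Type*} [CommRing R] (p : ℕ) (a : Ideal R) (e : ℕ) : Ideal R :=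
  sInf {I : Ideal R | a ≤ bracketPow I (p ^ e)}

/-- Condition (*): `a ⊆ I_e(a)^{[p^e]}` for every ideal `a` and every `e ≥ 1`. -/
def CondStar (R : Type*) [CommRing R] (p : ℕ) : Prop :=
  ∀ (a : Ideal R) (e : ℕ), 1 ≤ e → a ≤ bracketPow (Ie p a e) (p ^ e)

/-- The generalized test ideal `τ(a^c)`: the supremum, in the lattice of ideals of `R`,
of the ideals `I_e(a^{⌈c p^e⌉})` for `e ≥ 1`. -/
noncomputable def tau {R : Type*} [CommRing R] (p : ℕ) (a : Ideal R) (c : ℝ) : Ideal R :=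
  ⨆ e : {e : ℕ // 1 ≤ e}, Ie p (a ^ ⌈c * (p : ℝ) ^ (e : ℕ)⌉₊) (e : ℕ)

/-- `c > 0` is an F-jumping coefficient of `a` if `τ(a^c) ≠ τ(a^{c-ε})` for all
`0 < ε < c`. -/
def IsFJumpingCoeff {R : Type*} [CommRing R] (p : ℕ) (a : Ideal R) (c : ℝ) : Prop :=
  0 < c ∧ ∀ ε : ℝ, 0 < ε → ε < c → tau p a c ≠ tau p a (c - ε)

/-- `x` is an accumulation point of `S ⊆ ℝ`. -/
def IsAccumulationPt (S : Set ℝ) (x : ℝ) : Prop :=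
  ∀ ε : ℝ, 0 < ε → ∃ y ∈ S, y ≠ x ∧ |y - x| < ε

/-- `R` is a regular local ring: Noetherian, local, and the maximal ideal is generated
by `dim R` elements. -/
def IsRegularStmt (R : Type*) [CommRing R] [IsLocalRing R] : Prop :=
  ∃ s : Finset R, IsLocalRing.maximalIdeal R = Ideal.span (s : Set R) ∧
    (s.card : WithBot (WithTop ℕ)) = ringKrullDim R

/-!
For `c > m` Skoda's formula `τ(a^c) = a · τ(a^{c-1})` holds, so a jump of `τ(a^·)` at `α`
forces one at `α - 1`. At a fixed level `e`, with `q = p^e`, the formula comes from the pigeonhole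
inclusion `a^n ⊆ a^{[q]} a^{n-q}` for `n > m(q-1)` together with `I_e(a^{[q]} b) = a · I_e(b)`.

Condition (*) makes Frobenius commute with intersections, so
`I^{[q]} ∩ (g^q) = (I : g)^{[q]} (g^q)`. In a domain this gives
`(I^{[q]} : g^q) = (I : g)^{[q]}`, which is what `a · I_e(b) ⊆ I_e(a^{[q]} b)` needs. The domain
property comes from the same formula: applied to `z` and `z + t` with `t` nilpotent, and to `u`
and `u + v` with `uv = 0`, it puts `t` and `u²` in every power of the maximal ideal, and Krull's
intersection theorem kills them. This needs a non-nilpotent element in the maximal ideal;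
otherwise `dim R = 0` and regularity makes `R` a field.
-/

open Ideal IsLocalRing

section BracketPow

variable {R : Type*} [CommRing R]

lemma pow_mem_bracketPow {J : Ideal R} {x : R} (hx : x ∈ J) (q : ℕ) :
    x ^ q ∈ bracketPow J q :=
  subset_span ⟨x, hx, rfl⟩

lemma bracketPow_mono {I J : Ideal R} (h : I ≤ J) (q : ℕ) : bracketPow I q ≤ bracketPow J q :=
  span_mono (Set.image_mono h)

lemma bracketPow_le_pow (J : Ideal R) (q : ℕ) : bracketPow J q ≤ J ^ q :=
  span_le.mpr <| by rintro _ ⟨x, hx, rfl⟩; exact pow_mem_pow hx q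

lemma bracketPow_le_maximalIdeal_pow [IsLocalRing R] {J : Ideal R} (hJ : J ≠ ⊤) (q : ℕ) :
    bracketPow J q ≤ maximalIdeal R ^ q :=
  (bracketPow_le_pow J q).trans (pow_right_mono (le_maximalIdeal hJ) q)

variable {p : ℕ} [ExpChar R p]

lemma bracketPow_eq_map (J : Ideal R) (e : ℕ) :
    bracketPow J (p ^ e) = J.map (iterateFrobenius R p e) := by
  have hfrob : ⇑(iterateFrobenius R p e) = (· ^ p ^ e) := funext (iterateFrobenius_def p e)
  rw [Ideal.map, hfrob]
  rfl

lemma bracketPow_mul (I J : Ideal R) (e : ℕ) :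
    bracketPow (I * J) (p ^ e) = bracketPow I (p ^ e) * bracketPow J (p ^ e) := by
  simp only [bracketPow_eq_map, Ideal.map_mul]

lemma bracketPow_span_singleton (g : R) (e : ℕ) :
    bracketPow (span {g}) (p ^ e) = span {g ^ p ^ e} := by
  rw [bracketPow_eq_map, map_span, Set.image_singleton, iterateFrobenius_def]

end BracketPow

lemma Ie_le {R : Type*} [CommRing R] {p e : ℕ} {a I : Ideal R} (h : a ≤ bracketPow I (p ^ e)) :
    Ie p a e ≤ I :=
  sInf_le h

lemma Ie_mono {R : Type*} [CommRing R] {p : ℕ} {a b : Ideal R} (h : a ≤ b) (e : ℕ) :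
    Ie p a e ≤ Ie p b e :=
  sInf_le_sInf fun _ hI => h.trans hI

lemma Ideal.inf_span_singleton_eq_colon_mul {R : Type*} [CommRing R] (I : Ideal R) (g : R) :
    I ⊓ span {g} = I.colon (span {g}) * span {g} := by
  refine le_antisymm ?_ ?_
  · rintro _ ⟨hu, hg⟩
    obtain ⟨r, rfl⟩ := mem_span_singleton'.mp hg
    exact mul_mem_mul (mem_colon_span_singleton.mpr hu) (mem_span_singleton_self g)
  · rw [mul_comm, span_singleton_mul_le_iff]
    intro r hr
    exact ⟨mul_comm r g ▸ mem_colon_span_singleton.mp hr,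
      mul_mem_right r _ (mem_span_singleton_self g)⟩

lemma IsLocalRing.eq_zero_of_forall_mem_maximalIdeal_pow {R : Type*} [CommRing R]
    [IsLocalRing R] [IsNoetherianRing R] {x : R} (h : ∀ n, x ∈ maximalIdeal R ^ n) : x = 0 := by
  have hx : x ∈ ⨅ n, maximalIdeal R ^ n := Submodule.mem_iInf _ |>.mpr h
  rwa [iInf_pow_eq_bot_of_isLocalRing _ (maximalIdeal.isMaximal R).ne_top] at hx

lemma IsLocalRing.eq_zero_of_eq_mul_of_mem_maximalIdeal {R : Type*} [CommRing R] [IsLocalRing R]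
    {x c : R} (hx : x = c * x) (hc : c ∈ maximalIdeal R) : x = 0 := by
  have hu := isUnit_one_sub_self_of_mem_nonunits c hc
  exact hu.mul_right_eq_zero.mp (by rw [sub_mul, one_mul, ← hx, sub_self])

lemma mul_add_pow_of_mul_eq_zero {R : Type*} [CommRing R] {u v : R} (huv : u * v = 0) (n : ℕ) :
    u * (u + v) ^ n = u ^ (n + 1) := by
  induction n with
  | zero => simp
  | succ n ih => rw [pow_succ, ← mul_assoc, ih]; linear_combination u ^ n * huv

namespace CondStar

variable {R : Type*} [CommRing R] {p : ℕ}

lemma bracketPow_inf (hstar : CondStar R p) {e : ℕ} (he : 1 ≤ e) (I J : Ideal R) :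
    bracketPow (I ⊓ J) (p ^ e) = bracketPow I (p ^ e) ⊓ bracketPow J (p ^ e) := by
  refine le_antisymm (le_inf (bracketPow_mono inf_le_left _) (bracketPow_mono inf_le_right _)) ?_
  exact (hstar _ e he).trans (bracketPow_mono (le_inf (Ie_le inf_le_left) (Ie_le inf_le_right)) _)

variable [ExpChar R p]

lemma exists_mem_bracketPow_colon (hstar : CondStar R p) {e : ℕ} (he : 1 ≤ e) {I : Ideal R}
    {g r : R} (hrI : r ∈ bracketPow I (p ^ e)) (hrg : r ∈ span {g ^ p ^ e}) :
    ∃ c ∈ bracketPow (I.colon (span {g})) (p ^ e), c * g ^ p ^ e = r := by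
  rw [← mem_mul_span_singleton, ← bracketPow_span_singleton, ← bracketPow_mul,
    ← inf_span_singleton_eq_colon_mul, hstar.bracketPow_inf he, bracketPow_span_singleton]
  exact ⟨hrI, hrg⟩

lemma mem_span_singleton_of_pow_eq_zero [IsLocalRing R] (hstar : CondStar R p) {e : ℕ}
    (he : 1 ≤ e) {t z : R} (ht : t ^ p ^ e = 0) (hz : z ^ p ^ e ≠ 0) : t ∈ span {z} := by
  have hzt : (z + t) ^ p ^ e = z ^ p ^ e := by rw [add_pow_expChar_pow, ht, add_zero]
  obtain ⟨c, hc, hcz⟩ := hstar.exists_mem_bracketPow_colon he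
    (pow_mem_bracketPow (mem_span_singleton_self z) _)
    (by rw [hzt]; exact mem_span_singleton_self _)
  by_cases hC : (span {z}).colon (span {z + t}) = ⊤
  · have hz_t := mem_colon_span_singleton.mp (hC ▸ Submodule.mem_top : (1 : R) ∈ _)
    simpa using sub_mem hz_t (mem_span_singleton_self z)
  · refine absurd (eq_zero_of_eq_mul_of_mem_maximalIdeal (hzt ▸ hcz).symm ?_) hz
    exact pow_le_self (pow_ne_zero _ (expChar_ne_zero R p))
      (bracketPow_le_maximalIdeal_pow hC _ hc)

section Noetherian

variable [IsLocalRing R] [IsNoetherianRing R]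

lemma isReduced (hstar : CondStar R p) (hp : 1 < p) {y : R} (hy : y ∈ maximalIdeal R)
    (hyn : ¬IsNilpotent y) : IsReduced R := by
  refine ⟨fun t ⟨n, hn⟩ => eq_zero_of_forall_mem_maximalIdeal_pow fun k => ?_⟩
  have hnq : n ≤ p ^ (n + 1) := (Nat.lt_pow_self hp).le.trans' (Nat.le_succ n)
  have hyk : (y ^ k) ^ p ^ (n + 1) ≠ 0 := fun h => hyn ⟨_, by rwa [← pow_mul] at h⟩
  have ht := hstar.mem_span_singleton_of_pow_eq_zero (Nat.le_add_left 1 n)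
    (pow_eq_zero_of_le hnq hn) hyk
  exact (span_singleton_le_iff_mem _).mpr (pow_mem_pow hy k) ht

lemma noZeroDivisors [IsReduced R] (hstar : CondStar R p) (hp : 1 < p) : NoZeroDivisors R := by
  refine ⟨fun {u v} huv => or_iff_not_imp_right.mpr fun hv => ?_⟩
  set C := (span {u}).colon (span {u + v})
  have hC : C ≠ ⊤ := by
    intro hC
    have hvu : v ∈ span {u} := by
      simpa using sub_mem (mem_colon_span_singleton.mp (hC ▸ Submodule.mem_top : (1 : R) ∈ C))
        (mem_span_singleton_self u)
    obtain ⟨r, rfl⟩ := mem_span_singleton'.mp hvu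
    exact hv (IsReduced.eq_zero _ ⟨2, by linear_combination r * huv⟩)
  have hsq : ∀ e, 1 ≤ e → u * u ∈ maximalIdeal R ^ p ^ e := by
    intro e he
    have hmul := mul_add_pow_of_mul_eq_zero huv (p ^ e)
    obtain ⟨c, hc, hcu⟩ := hstar.exists_mem_bracketPow_colon he (I := span {u}) (g := u + v)
      (pow_succ' u _ ▸ mul_mem_left _ u (pow_mem_bracketPow (mem_span_singleton_self u) _))
      (mem_span_singleton'.mpr ⟨u, hmul⟩)
    -- multiplying `c * (u + v) ^ q = u ^ (q + 1)` by `u` gives `u ^ (q + 1) * (u - c) = 0`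
    have hu_c : u * (u - c) = 0 := IsReduced.eq_zero _ ⟨p ^ e + 1, by
      rw [mul_pow, pow_succ (u - c)]
      linear_combination (u - c) ^ p ^ e * (c * hmul - u * hcu)⟩
    rw [show u * u = c * u by linear_combination hu_c]
    exact mul_mem_right _ _ (bracketPow_le_maximalIdeal_pow hC _ hc)
  have huu := eq_zero_of_forall_mem_maximalIdeal_pow fun n =>
    pow_le_pow_right ((Nat.lt_pow_self hp).le.trans' (Nat.le_succ n)) (hsq (n + 1) (by omega))
  exact IsReduced.eq_zero u ⟨2, by rw [sq, huu]⟩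

end Noetherian

end CondStar

lemma IsRegularStmt.maximalIdeal_eq_bot_of_le_nilradical {R : Type*} [CommRing R] [IsLocalRing R]
    (hreg : IsRegularStmt R) (h : maximalIdeal R ≤ nilradical R) : maximalIdeal R = ⊥ := by
  have : (nilradical R).IsMaximal :=
    le_antisymm h (nilradical_le_prime _) ▸ maximalIdeal.isMaximal R
  have hdim :=
    ringKrullDimZero_iff_ringKrullDim_eq_zero.mp (Ring.KrullDimLE.of_isMaximal_nilradical R)
  obtain ⟨s, hs, hcard⟩ := hreg
  rw [hdim] at hcard
  have hs0 : s = ∅ := Finset.card_eq_zero.mp (Nat.cast_eq_zero.mp hcard)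
  rw [hs, hs0, Finset.coe_empty, span_empty]

lemma IsRegularStmt.isDomain {R : Type*} [CommRing R] [IsLocalRing R] [IsNoetherianRing R]
    {p : ℕ} [ExpChar R p] (hreg : IsRegularStmt R) (hp : 1 < p) (hstar : CondStar R p) :
    IsDomain R := by
  by_cases h : maximalIdeal R ≤ nilradical R
  · exact (isField_iff_maximalIdeal_eq.mpr
      (hreg.maximalIdeal_eq_bot_of_le_nilradical h)).isDomain
  · obtain ⟨y, hy, hyn⟩ := Set.not_subset.mp h
    have := hstar.isReduced hp hy hyn
    have := hstar.noZeroDivisors hp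
    exact NoZeroDivisors.to_isDomain R

lemma prod_pow_mem_bracketPow_mul_pow {R : Type*} [CommRing R] {ι : Type*} [Fintype ι]
    [DecidableEq ι] (x : ι → R) (d : ι → ℕ) {q : ℕ} (hd : Fintype.card ι * (q - 1) < ∑ i, d i) :
    ∏ i, x i ^ d i ∈ bracketPow (span (Set.range x)) q * span (Set.range x) ^ (∑ i, d i - q) := by
  obtain ⟨i, hi⟩ : ∃ i, q ≤ d i := by
    by_contra! h
    have := Finset.sum_le_card_nsmul Finset.univ d (q - 1) fun i _ => Nat.le_sub_one_of_lt (h i)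
    rw [Finset.card_univ, smul_eq_mul] at this
    exact absurd this (not_le.mpr hd)
  set d' := Function.update d i (d i - q)
  have hd'i : d' i = d i - q := Function.update_self ..
  have hrest : ∀ j ∈ Finset.univ.erase i, d' j = d j := fun j hj =>
    Function.update_of_ne (Finset.ne_of_mem_erase hj) _ _
  have hsum : ∑ j, d j = q + ∑ j, d' j := by
    rw [← Finset.add_sum_erase Finset.univ d (Finset.mem_univ i),
      ← Finset.add_sum_erase Finset.univ d' (Finset.mem_univ i), Finset.sum_congr rfl hrest,
      hd'i, ← add_assoc, Nat.add_sub_cancel' hi]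
  have hprod : ∏ j, x j ^ d j = x i ^ q * ∏ j, x j ^ d' j := by
    rw [← Finset.mul_prod_erase Finset.univ (fun j => x j ^ d j) (Finset.mem_univ i),
      ← Finset.mul_prod_erase Finset.univ (fun j => x j ^ d' j) (Finset.mem_univ i),
      Finset.prod_congr rfl fun j hj => by rw [← hrest j hj], hd'i, ← mul_assoc, ← pow_add,
      Nat.add_sub_cancel' hi]
  rw [hprod, hsum, Nat.add_sub_cancel_left, ← Finset.prod_pow_eq_pow_sum]
  exact mul_mem_mul (pow_mem_bracketPow (subset_span (Set.mem_range_self i)) q)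
    (prod_mem_prod fun j _ => pow_mem_pow (subset_span (Set.mem_range_self j)) _)

lemma span_range_pow_le_bracketPow_mul_pow {R : Type*} [CommRing R] {ι : Type*} [Fintype ι]
    (x : ι → R) {q n : ℕ} (hn : Fintype.card ι * (q - 1) < n) :
    span (Set.range x) ^ n ≤ bracketPow (span (Set.range x)) q * span (Set.range x) ^ (n - q) := by
  classical
  intro y hy
  obtain ⟨P, hP, rfl⟩ := (mem_span_pow_iff_exists_isHomogeneous x y).mp hy
  rw [MvPolynomial.eval_eq']
  refine sum_mem fun d hd => mul_mem_left _ _ ?_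
  have hdeg : ∑ i, d i = n := by
    rw [← Finsupp.degree_eq_sum, Finsupp.degree_eq_weight_one]
    exact hP (MvPolynomial.mem_support_iff.mp hd)
  exact hdeg ▸ prod_pow_mem_bracketPow_mul_pow x d (hdeg ▸ hn)

namespace CondStar

variable {R : Type*} [CommRing R] {p : ℕ} [ExpChar R p]

lemma mem_bracketPow_colon_of_mul_pow_mem [IsDomain R] (hstar : CondStar R p) {e : ℕ}
    (he : 1 ≤ e) {I : Ideal R} {g r : R} (hg : g ≠ 0) (hr : r * g ^ p ^ e ∈ bracketPow I (p ^ e)) :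
    r ∈ bracketPow (I.colon (span {g})) (p ^ e) := by
  obtain ⟨c, hc, hcr⟩ :=
    hstar.exists_mem_bracketPow_colon he hr (mem_span_singleton'.mpr ⟨r, rfl⟩)
  rwa [← mul_right_cancel₀ (pow_ne_zero _ hg) hcr]

lemma Ie_bracketPow_mul_le (hstar : CondStar R p) {e : ℕ} (he : 1 ≤ e) (a b : Ideal R) :
    Ie p (bracketPow a (p ^ e) * b) e ≤ a * Ie p b e :=
  Ie_le <| by rw [bracketPow_mul]; exact mul_mono_right (hstar b e he)

lemma mul_Ie_le [IsDomain R] (hstar : CondStar R p) {e : ℕ} (he : 1 ≤ e) (a b : Ideal R) :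
    a * Ie p b e ≤ Ie p (bracketPow a (p ^ e) * b) e := by
  refine mul_le.mpr fun g hg s hs => ?_
  obtain rfl | hg0 := eq_or_ne g 0
  · rw [zero_mul]
    exact zero_mem _
  set I := Ie p (bracketPow a (p ^ e) * b) e
  have hb : b ≤ bracketPow (I.colon (span {g})) (p ^ e) := fun w hw =>
    hstar.mem_bracketPow_colon_of_mul_pow_mem he hg0 <| hstar _ e he <| by
      rw [mul_comm w]
      exact mul_mem_mul (pow_mem_bracketPow hg _) hw
  rw [mul_comm]
  exact mem_colon_span_singleton.mp (Ie_le hb hs)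

lemma Ie_span_range_pow_eq_mul [IsDomain R] (hstar : CondStar R p) {e : ℕ} (he : 1 ≤ e)
    {ι : Type*} [Fintype ι] (x : ι → R) {n : ℕ} (hn : Fintype.card ι * (p ^ e - 1) < n)
    (hqn : p ^ e ≤ n) :
    Ie p (span (Set.range x) ^ n) e =
      span (Set.range x) * Ie p (span (Set.range x) ^ (n - p ^ e)) e := by
  set a := span (Set.range x)
  have hle : bracketPow a (p ^ e) * a ^ (n - p ^ e) ≤ a ^ n := by
    refine (mul_mono_left (bracketPow_le_pow a _)).trans ?_
    rw [← pow_add, Nat.add_sub_cancel' hqn]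
  refine le_antisymm ?_ ((hstar.mul_Ie_le he _ _).trans (Ie_mono hle e))
  exact (Ie_mono (span_range_pow_le_bracketPow_mul_pow x hn) e).trans
    (hstar.Ie_bracketPow_mul_le he _ _)

end CondStar

lemma tau_antitone {R : Type*} [CommRing R] (p : ℕ) (a : Ideal R) : Antitone (tau p a) :=
  fun _ _ h => iSup_mono fun _ => Ie_mono (pow_le_pow_right <| Nat.ceil_mono <|
    mul_le_mul_of_nonneg_right h (by positivity)) _

lemma tau_bot {R : Type*} [CommRing R] {p : ℕ} (hp : 0 < p) {c : ℝ} (hc : 0 < c) :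
    tau p (⊥ : Ideal R) c = ⊥ := by
  refine iSup_eq_bot.mpr fun e => le_bot_iff.mp (Ie_le ?_)
  rw [← zero_eq_bot, zero_pow (Nat.ceil_pos.mpr (by positivity)).ne']
  exact bot_le

lemma not_isFJumpingCoeff_bot {R : Type*} [CommRing R] {p : ℕ} (hp : 0 < p) (c : ℝ) :
    ¬IsFJumpingCoeff p (⊥ : Ideal R) c := fun ⟨hc, h⟩ =>
  h (c / 2) (by linarith) (by linarith) (by rw [tau_bot hp hc, tau_bot hp (by linarith)])

lemma CondStar.tau_span_range_eq_mul {R : Type*} [CommRing R] {p : ℕ} [ExpChar R p]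
    [IsDomain R] (hstar : CondStar R p) {ι : Type*} [Fintype ι] (x : ι → R) {c : ℝ}
    (hc : Fintype.card ι < c) (hc1 : 1 ≤ c) :
    tau p (span (Set.range x)) c = span (Set.range x) * tau p (span (Set.range x)) (c - 1) := by
  rw [tau, tau, mul_iSup]
  refine iSup_congr fun ⟨e, he⟩ => ?_
  have hq : (0 : ℝ) < (p : ℝ) ^ e := by have := expChar_pos R p; positivity
  have hceil : ⌈(c - 1) * (p : ℝ) ^ e⌉₊ = ⌈c * (p : ℝ) ^ e⌉₊ - p ^ e := by
    rw [sub_mul, one_mul, ← Nat.cast_pow, Nat.ceil_sub_natCast]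
  rw [hceil]
  refine hstar.Ie_span_range_pow_eq_mul he x ?_ ?_
  · refine Nat.lt_ceil.mpr <|
      lt_of_le_of_lt (Nat.cast_le.mpr (Nat.mul_le_mul_left _ (Nat.sub_le _ 1))) ?_
    push_cast
    exact mul_lt_mul_of_pos_right hc hq
  · refine Nat.cast_le.mp (le_trans ?_ (Nat.le_ceil (R := ℝ) _))
    push_cast
    exact le_mul_of_one_le_left hq.le hc1

lemma IsFJumpingCoeff.sub_one {R : Type*} [CommRing R] {p : ℕ} {a : Ideal R} {m α : ℝ}
    (h : IsFJumpingCoeff p a α) (hm : 1 ≤ m) (hα : m < α)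
    (hτ : ∀ c, m < c → tau p a c = a * tau p a (c - 1)) : IsFJumpingCoeff p a (α - 1) := by
  refine ⟨by linarith, fun ε hε hεα hjump => ?_⟩
  set δ := min ε ((α - m) / 2)
  have hδ : 0 < δ := lt_min hε (by linarith)
  have hδε : δ ≤ ε := min_le_left _ _
  have hδα : δ < α - m := (min_le_right _ _).trans_lt (by linarith)
  have hconst : tau p a (α - 1 - δ) = tau p a (α - 1) :=
    le_antisymm ((tau_antitone p a (by linarith)).trans hjump.ge) (tau_antitone p a (by linarith))
  refine h.2 δ hδ (by linarith) ?_
  rw [hτ α (by linarith), hτ (α - δ) (by linarith), sub_right_comm α δ 1, hconst]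

/-- If `a` is generated by `m` elements and `α > m` is an F-jumping coefficient of `a`,
then `α - 1` is also an F-jumping coefficient of `a`. -/
theorem stmt6 {R : Type*} [CommRing R] [IsNoetherianRing R] [IsLocalRing R]
    (p : ℕ) (hp : p.Prime) [CharP R p]
    (hreg : IsRegularStmt R) (hstar : CondStar R p) (a : Ideal R)
    (m : ℕ) (x : Fin m → R) (hgen : a = Ideal.span (Set.range x))
    (α : ℝ) (hα : (m : ℝ) < α) (h : IsFJumpingCoeff p a α) :
    IsFJumpingCoeff p a (α - 1) := by
  have : Fact p.Prime := ⟨hp⟩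
  have := hreg.isDomain hp.one_lt hstar
  subst hgen
  rcases Nat.eq_zero_or_pos m with rfl | hm
  · rw [Set.range_eq_empty, span_empty] at h
    exact absurd h (not_isFJumpingCoeff_bot hp.pos α)
  have hm' : (1 : ℝ) ≤ m := by exact_mod_cast hm
  refine h.sub_one hm' hα fun c hc => ?_
  simpa using hstar.tau_span_range_eq_mul x (by simpa using hc) (by linarith)
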